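/- arXiv:1212.0463 — 2 statements merged into one kernel-verified Lean document; each statement's English description precedes it below -/
import Mathlib

section
/- Sauer–Shelah style growth bound: if a collection 𝒞 of subsets of a set 𝕌 has VC dimension d < ∞, then for every n ≥ 1 the growth function satisfies G(n, 𝒞) ≤ (n+1)^d, where G(n, 𝒞) is the maximum over sets S ⊆ 𝕌 of cardinality n of the number of distinct subsets of S of the form S ∩ C for C ∈ 𝒞. -/
/-!
The traces `S ∩ C`, `C ∈ 𝒞`, form a family of subsets of the `n`-set `S`. By Pajor's form of
the Sauer–Shelah lemma this family has at most as many members as there are sets it shatters.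
Every such set is shattered by `𝒞` as well, so it has at most `d` elements, and an `n`-set has
`∑_{k ≤ d} (n choose k) ≤ (n + 1)^d` subsets of size at most `d`.
-/

/-- `𝒞` shatters a finite set `S` if every subset of `S` is of the form `S ∩ C`
for some `C ∈ 𝒞`. -/
def SetShatters {U : Type*} (𝒞 : Set (Set U)) (S : Finset U) : Prop :=
  ∀ S' : Set U, S' ⊆ (S : Set U) → ∃ C ∈ 𝒞, S' = (S : Set U) ∩ C

section

open Finset

theorem Nat.sum_Iic_choose_le_add_one_pow (n d : ℕ) :
    ∑ k ∈ Iic d, n.choose k ≤ (n + 1) ^ d := by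
  rw [add_pow, ← Nat.range_succ_eq_Iic]
  refine sum_le_sum fun k hk => ?_
  calc n.choose k ≤ n ^ k := n.choose_le_pow k
    _ ≤ n ^ k * 1 ^ (d - k) * d.choose k := by
      rw [one_pow, mul_one]
      exact Nat.le_mul_of_pos_right _ (Nat.choose_pos (Nat.lt_succ_iff.1 (mem_range.1 hk)))

theorem Finset.card_le_sum_choose_of_shatters {α : Type*} [DecidableEq α]
    {𝒜 : Finset (Finset α)} {S : Finset α} {d : ℕ} (h𝒜 : 𝒜 ⊆ S.powerset)
    (hd : ∀ s, 𝒜.Shatters s → #s ≤ d) :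
    #𝒜 ≤ ∑ k ∈ Iic d, (#S).choose k := by
  have hshatterer : 𝒜.shatterer ⊆ (Iic d).biUnion (powersetCard · S) := by
    intro s hs
    rw [mem_shatterer] at hs
    obtain ⟨t, ht, hst⟩ := hs.exists_superset
    exact mem_biUnion.2 ⟨#s, mem_Iic.2 (hd s hs),
      mem_powersetCard.2 ⟨hst.trans (mem_powerset.1 (h𝒜 ht)), rfl⟩⟩
  calc #𝒜 ≤ #𝒜.shatterer := card_le_card_shatterer 𝒜
    _ ≤ #((Iic d).biUnion (powersetCard · S)) := card_le_card hshatterer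
    _ ≤ ∑ k ∈ Iic d, #(powersetCard k S) := card_biUnion_le
    _ = ∑ k ∈ Iic d, (#S).choose k := by simp only [card_powersetCard]

variable {U : Type*}

open Classical in
noncomputable def traces (𝒞 : Set (Set U)) (S : Finset U) : Finset (Finset U) :=
  {t ∈ S.powerset | ∃ C ∈ 𝒞, (t : Set U) = (S : Set U) ∩ C}

lemma traces_subset_powerset (𝒞 : Set (Set U)) (S : Finset U) :
    traces 𝒞 S ⊆ S.powerset := by
  classical exact filter_subset _ _

lemma mem_traces {𝒞 : Set (Set U)} {S t : Finset U} :
    t ∈ traces 𝒞 S ↔ ∃ C ∈ 𝒞, (t : Set U) = (S : Set U) ∩ C := by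
  classical
  simp only [traces, mem_filter, mem_powerset, and_iff_right_iff_imp]
  rintro ⟨C, -, htC⟩
  exact coe_subset.1 (htC ▸ Set.inter_subset_left)

lemma ncard_setOf_trace_eq_card_traces (𝒞 : Set (Set U)) (S : Finset U) :
    {T : Set U | ∃ C ∈ 𝒞, T = (S : Set U) ∩ C}.ncard = #(traces 𝒞 S) := by
  classical
  have himage : {T : Set U | ∃ C ∈ 𝒞, T = (S : Set U) ∩ C} =
      (↑) '' (traces 𝒞 S : Set (Finset U)) := by
    ext T
    simp only [Set.mem_ofPred_eq, Set.mem_image, mem_coe, mem_traces]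
    constructor
    · rintro ⟨C, hC, rfl⟩
      exact ⟨{x ∈ S | x ∈ C}, ⟨C, hC, coe_filter _ _⟩, coe_filter _ _⟩
    · rintro ⟨t, ⟨C, hC, htC⟩, rfl⟩
      exact ⟨C, hC, htC⟩
  rw [himage, Set.ncard_image_of_injective _ coe_injective, Set.ncard_coe_finset]

lemma SetShatters.of_shatters_traces [DecidableEq U] {𝒞 : Set (Set U)} {S s : Finset U}
    (hs : (traces 𝒞 S).Shatters s) : SetShatters 𝒞 s := by
  classical
  intro S' hS'
  obtain ⟨u, hu, hsu⟩ := hs (filter_subset (· ∈ S') s)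
  obtain ⟨C, hC, huC⟩ := mem_traces.1 hu
  obtain ⟨t, ht, hst⟩ := hs.exists_superset
  have hsS : (s : Set U) ⊆ S :=
    coe_subset.2 (hst.trans (mem_powerset.1 (traces_subset_powerset 𝒞 S ht)))
  refine ⟨C, hC, ?_⟩
  calc S' = ↑({x ∈ s | x ∈ S'}) := by rw [coe_filter]; exact (Set.inter_eq_right.2 hS').symm
    _ = ↑s ∩ ↑u := by rw [← hsu, coe_inter]
    _ = ↑s ∩ C := by rw [huC, ← Set.inter_assoc, Set.inter_eq_left.2 hsS]

end

theorem growth_function_bound_general {U : Type*} (𝒞 : Set (Set U)) (d : ℕ)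
    (hVC : ∀ S : Finset U, SetShatters 𝒞 S → S.card ≤ d)
    (n : ℕ) (S : Finset U) (hS : S.card = n) :
    Set.ncard {T : Set U | ∃ C ∈ 𝒞, T = (S : Set U) ∩ C} ≤ (n + 1) ^ d := by
  classical
  rw [ncard_setOf_trace_eq_card_traces, ← hS]
  calc (traces 𝒞 S).card ≤ ∑ k ∈ Finset.Iic d, S.card.choose k :=
        Finset.card_le_sum_choose_of_shatters (traces_subset_powerset 𝒞 S)
          fun s hs => hVC s (SetShatters.of_shatters_traces hs)
    _ ≤ (S.card + 1) ^ d := Nat.sum_Iic_choose_le_add_one_pow _ _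

/-- Sauer–Shelah style growth bound: if the VC dimension of `𝒞` is at most `d`
(no shattered set has cardinality exceeding `d`), then for every `n ≥ 1` the
growth function satisfies `G(n, 𝒞) ≤ (n+1)^d`: every `n`-point set `S` admits at
most `(n+1)^d` distinct traces `S ∩ C`, `C ∈ 𝒞`. -/
theorem growth_function_bound {U : Type*} (𝒞 : Set (Set U)) (d : ℕ)
    (hVC : ∀ S : Finset U, SetShatters 𝒞 S → S.card ≤ d)
    (n : ℕ) (hn : 1 ≤ n) (S : Finset U) (hS : S.card = n) :
    Set.ncard {T : Set U | ∃ C ∈ 𝒞, T = (S : Set U) ∩ C} ≤ (n + 1) ^ d :=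
  growth_function_bound_general 𝒞 d hVC n S hS
end

section
/- Oracle loss upper rate under exponential β-mixing: suppose 0 ≤ ℓ < K and a uniform deviation bound P(sup_{f∈ℱ}|Rₙ(f) − R̂ₙ(f)| > ε) ≤ 8(2μ+1)^h exp(−με²/K₁²) + 2μβ_{a−d} holds for all integers μ, a with 2μa + d ≤ n, where β_a = c₁exp(−c₂a^κ). Then for sufficiently large n there is a constant C (independent of n and h) with E[Rₙ(f̂_erm) − Rₙ(f*)] ≤ C·√(h·log n / n^{κ/(1+κ)}), obtained by taking aₙ = n^{1/(1+κ)} and μₙ = n^{κ/(1+κ)} and integrating the tail bound. -/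
/-!
Off the event `{∃ f, s < |Rₙ f - R̂ₙ f|}` the empirical minimiser loses at most `2 s` against
any competitor, and on it at most `K`; hence `E[Rₙ(f̂) - Rₙ(f*)] ≤ 2 s + K · P(deviation > s)`.
Take blocks of length `a ≈ n^{1/(1+κ)}`, so that `(a - d)^κ ≥ n^{κ/(1+κ)}`, about
`μ ≈ n^{κ/(1+κ)}` of them, and `s = K₁ √(2 h log n / μ)`, so that
`exp (-μ s² / K₁²) = n^{-2h}` beats the factor `(2μ+1)^h ≤ n^h`. Then both terms of the
deviation bound are `o(n^{-1/2})`, below the rate `√(h log n / n^{κ/(1+κ)})`, while `2 s` is of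
that order.
-/

open MeasureTheory Real Filter Topology

theorem integral_le_add_mul_measureReal_lt {Ω : Type*} [MeasurableSpace Ω] {P : Measure Ω}
    [IsProbabilityMeasure P] {Z : Ω → ℝ} (hZ : Integrable Z P) {t K : ℝ} (ht : 0 ≤ t)
    (hZK : ∀ ω, Z ω ≤ K) :
    ∫ ω, Z ω ∂P ≤ t + K * P.real {ω | t < Z ω} := by
  set A := {ω | t < Z ω}
  have hA : NullMeasurableSet A P := nullMeasurableSet_lt aemeasurable_const hZ.aemeasurable
  have h_on : ∫ ω in A, Z ω ∂P ≤ K * P.real A := by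
    calc ∫ ω in A, Z ω ∂P ≤ ∫ _ in A, K ∂P := integral_mono hZ.restrict (integrable_const _) hZK
      _ = K * P.real A := by rw [setIntegral_const, smul_eq_mul, mul_comm]
  have h_off : ∫ ω in Aᶜ, Z ω ∂P ≤ t := by
    calc ∫ ω in Aᶜ, Z ω ∂P ≤ ∫ _ in Aᶜ, t ∂P := by
          refine integral_mono_ae hZ.restrict (integrable_const _) ?_
          filter_upwards [ae_restrict_mem₀ hA.compl] with ω hω using not_lt.1 hω
      _ = P.real Aᶜ * t := by rw [setIntegral_const, smul_eq_mul]
      _ ≤ 1 * t := by gcongr; exact measureReal_le_one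
      _ = t := one_mul t
  rw [← integral_add_compl₀ hA hZ]
  linarith

theorem exists_lt_abs_sub_of_two_mul_lt_sub {ℱ : Type*} {R Rhat : ℱ → ℝ} {f g : ℱ}
    (hfg : Rhat f ≤ Rhat g) {s : ℝ} (h : 2 * s < R f - R g) : ∃ f', s < |R f' - Rhat f'| := by
  by_contra! hdev
  have hf := abs_le.1 (hdev f)
  have hg := abs_le.1 (hdev g)
  linarith [hf.2, hg.1]

theorem integral_sub_le_of_measure_deviation_le {Ω ℱ : Type*} [MeasurableSpace Ω]
    {P : Measure Ω} [IsProbabilityMeasure P] {R : ℱ → ℝ} {Rhat : ℱ → Ω → ℝ} {ferm : Ω → ℱ}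
    {fstar : ℱ} {K s B : ℝ} (hK : 0 ≤ K) (hs : 0 ≤ s) (hB : 0 ≤ B)
    (hRK : ∀ f, 0 ≤ R f ∧ R f ≤ K) (herm : ∀ ω, Rhat (ferm ω) ω ≤ Rhat fstar ω)
    (hint : Integrable (fun ω => R (ferm ω)) P)
    (hdev : P {ω | ∃ f, s < |R f - Rhat f ω|} ≤ ENNReal.ofReal B) :
    (∫ ω, R (ferm ω) ∂P) - R fstar ≤ 2 * s + K * B := by
  have hZ : Integrable (fun ω => R (ferm ω) - R fstar) P := hint.sub (integrable_const _)
  have hZK : ∀ ω, R (ferm ω) - R fstar ≤ K := fun ω => by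
    linarith [(hRK (ferm ω)).2, (hRK fstar).1]
  have hsub : {ω | 2 * s < R (ferm ω) - R fstar} ⊆ {ω | ∃ f, s < |R f - Rhat f ω|} :=
    fun ω hω => exists_lt_abs_sub_of_two_mul_lt_sub (herm ω) hω
  have hprob : P.real {ω | 2 * s < R (ferm ω) - R fstar} ≤ B := by
    rw [measureReal_def, ← ENNReal.toReal_ofReal hB]
    exact ENNReal.toReal_mono ENNReal.ofReal_ne_top ((measure_mono hsub).trans hdev)
  calc (∫ ω, R (ferm ω) ∂P) - R fstar = ∫ ω, (R (ferm ω) - R fstar) ∂P := by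
        rw [integral_sub hint (integrable_const _), integral_const, probReal_univ, one_smul]
    _ ≤ 2 * s + K * P.real {ω | 2 * s < R (ferm ω) - R fstar} :=
        integral_le_add_mul_measureReal_lt hZ (by linarith) hZK
    _ ≤ 2 * s + K * B := by gcongr

theorem tendsto_rpow_mul_exp_neg_mul_rpow_atTop_nhds_zero (s : ℝ) {c q : ℝ} (hc : 0 < c)
    (hq : 0 < q) : Tendsto (fun x => x ^ s * exp (-c * x ^ q)) atTop (𝓝 0) := by
  refine ((tendsto_rpow_mul_exp_neg_mul_atTop_nhds_zero (s / q) c hc).comp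
    (tendsto_rpow_atTop hq)).congr' ?_
  filter_upwards [eventually_ge_atTop 0] with x hx
  simp only [Function.comp_apply, ← rpow_mul hx, mul_div_cancel₀ s hq.ne']

theorem eventually_div_add_mul_exp_neg_rpow_le_one_div_sqrt (A B : ℝ) {c q : ℝ} (hc : 0 < c)
    (hq : 0 < q) : ∀ᶠ x : ℝ in atTop, A / x + B * x * exp (-c * x ^ q) ≤ 1 / sqrt x := by
  have hlim : Tendsto (fun x => A * x ^ (-(1 / 2) : ℝ) + B * (x ^ (3 / 2 : ℝ) * exp (-c * x ^ q)))
      atTop (𝓝 0) := by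
    simpa using ((tendsto_rpow_neg_atTop (by norm_num : (0 : ℝ) < 1 / 2)).const_mul A).add
      ((tendsto_rpow_mul_exp_neg_mul_rpow_atTop_nhds_zero (3 / 2) hc hq).const_mul B)
  filter_upwards [hlim.eventually (eventually_le_nhds one_pos), eventually_gt_atTop 0]
    with x hx hx0
  have hsqrt : sqrt x = x ^ (1 / 2 : ℝ) := sqrt_eq_rpow x
  rw [le_div_iff₀ (sqrt_pos.2 hx0)]
  convert hx using 1
  rw [hsqrt, rpow_neg hx0.le, show (3 / 2 : ℝ) = 1 + 1 / 2 by norm_num, rpow_add hx0, rpow_one,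
    ← hsqrt]
  field_simp
  rw [sq_sqrt hx0.le]
  ring

theorem pow_mul_exp_neg_two_mul_log_le {x y : ℝ} (hx : 1 ≤ x) (hy : 0 ≤ y) (hyx : y ≤ x)
    {h : ℕ} (hh : 0 < h) : y ^ h * exp (-(2 * h * log x)) ≤ 1 / x := by
  have hx0 : 0 < x := by linarith
  have hexp : exp (-(2 * h * log x)) = 1 / x ^ (2 * h) := by
    rw [exp_neg, ← Nat.cast_ofNat, ← Nat.cast_mul, exp_nat_mul, exp_log hx0, one_div]
  calc y ^ h * exp (-(2 * h * log x)) ≤ x ^ h * (1 / x ^ (2 * h)) := by rw [hexp]; gcongr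
    _ = 1 / x ^ h := by field_simp; ring
    _ ≤ 1 / x := by gcongr; exact le_self_pow₀ hx hh.ne'

theorem mul_deviation_bound_le {x μ s K K₁ c₁ c₂ u v : ℝ} {h : ℕ} (hh : 0 < h) (hx : 1 ≤ x)
    (hμ : 0 ≤ μ) (hμx : 2 * μ + 1 ≤ x) (hs : μ * s ^ 2 / K₁ ^ 2 = 2 * h * log x) (hK : 0 ≤ K)
    (hc₁ : 0 ≤ c₁) (hc₂ : 0 ≤ c₂) (huv : u ≤ v) :
    K * (8 * (2 * μ + 1) ^ h * exp (-μ * s ^ 2 / K₁ ^ 2) + 2 * μ * (c₁ * exp (-c₂ * v))) ≤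
      8 * K / x + 2 * K * c₁ * x * exp (-c₂ * u) := by
  have hT₁ : 8 * (2 * μ + 1) ^ h * exp (-μ * s ^ 2 / K₁ ^ 2) ≤ 8 * (1 / x) := by
    rw [neg_mul, neg_div, hs, mul_assoc]
    gcongr
    exact pow_mul_exp_neg_two_mul_log_le hx (by positivity) hμx hh
  have hT₂ : 2 * μ * (c₁ * exp (-c₂ * v)) ≤ 2 * x * (c₁ * exp (-c₂ * u)) := by
    gcongr 2 * ?_ * (c₁ * exp ?_)
    · linarith
    · nlinarith
  calc _ ≤ K * (8 * (1 / x) + 2 * x * (c₁ * exp (-c₂ * u))) := by gcongr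
    _ = _ := by ring

theorem sqrt_two_mul_div_le {c y m : ℝ} (hc : 0 ≤ c) (hy : 0 < y) (hym : y ≤ 16 * m) :
    sqrt (2 * c / m) ≤ 6 * sqrt (c / y) := by
  have hm : 0 < m := by linarith
  rw [sqrt_le_iff, mul_pow, sq_sqrt (by positivity)]
  refine ⟨by positivity, ?_⟩
  rw [div_le_iff₀ hm, mul_div_assoc', div_mul_eq_mul_div, le_div_iff₀ hy]
  nlinarith

theorem one_div_sqrt_le_sqrt_mul_log_div_rpow {x h q : ℝ} (hx : exp 1 ≤ x) (hh : 1 ≤ h)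
    (hq : q ≤ 1) : 1 / sqrt x ≤ sqrt (h * log x / x ^ q) := by
  have hx1 : 1 ≤ x := (one_le_exp zero_le_one).trans hx
  have hx0 : 0 < x := by linarith
  have hlog : 1 ≤ log x := (le_log_iff_exp_le hx0).2 hx
  rw [← sqrt_one, ← sqrt_div' 1 hx0.le]
  apply sqrt_le_sqrt
  calc 1 / x ≤ 1 / x ^ q := by
        gcongr
        simpa using rpow_le_rpow_of_exponent_le hx1 hq
    _ ≤ h * log x / x ^ q := by gcongr; nlinarith

theorem eventually_exists_block_sizes {κ : ℝ} (hκ : 0 < κ) (d : ℕ) :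
    ∀ᶠ n : ℕ in atTop, ∃ μ a : ℕ, 0 < μ ∧ d < a ∧ 2 * μ * a + d ≤ n ∧ 2 * μ + 1 ≤ n ∧
      (n : ℝ) ^ (κ / (1 + κ)) ≤ 16 * μ ∧ (n : ℝ) ^ (κ / (1 + κ)) ≤ ((a : ℝ) - d) ^ κ := by
  have hpq : 1 / (1 + κ) + κ / (1 + κ) = 1 := by field_simp
  have hpκ : κ / (1 + κ) = 1 / (1 + κ) * κ := by ring
  set p := 1 / (1 + κ)
  set q := κ / (1 + κ)
  have hp : 0 < p := by positivity
  have hq : 0 < q := by positivity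
  have hcast := tendsto_natCast_atTop_atTop (R := ℝ)
  filter_upwards [((tendsto_rpow_atTop hp).comp hcast).eventually_ge_atTop ((d : ℝ) + 1),
    ((tendsto_rpow_atTop hq).comp hcast).eventually_ge_atTop 16,
    eventually_ge_atTop (2 * d), eventually_gt_atTop 0] with n hdp h16 h2d hn
  simp only [Function.comp_apply] at hdp h16
  have hx : 0 < (n : ℝ) := by exact_mod_cast hn
  set a := ⌊(n : ℝ) ^ p⌋₊ + d + 1 with ha
  set μ := n / (4 * a)
  have hda : (n : ℝ) ^ p ≤ (a : ℝ) - d := by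
    have := Nat.lt_floor_add_one ((n : ℝ) ^ p)
    push_cast [ha]; linarith
  have ha_le : (a : ℝ) ≤ 2 * (n : ℝ) ^ p := by
    have := Nat.floor_le (rpow_nonneg hx.le p)
    push_cast [ha]; linarith
  have hμ_lt : (n : ℝ) < 4 * a * (μ + 1) := by
    exact_mod_cast (Nat.lt_mul_div_succ n (by omega) : n < 4 * a * (μ + 1))
  have hn_split : (n : ℝ) = (n : ℝ) ^ p * (n : ℝ) ^ q := by rw [← rpow_add hx, hpq, rpow_one]
  have hq_lt : (n : ℝ) ^ q < 8 * (μ + 1) := by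
    have : (n : ℝ) ^ p * (n : ℝ) ^ q < (n : ℝ) ^ p * (8 * (μ + 1)) := by
      nlinarith [rpow_pos_of_pos hx p]
    exact lt_of_mul_lt_mul_left this (by positivity)
  have hμ : 1 ≤ μ := by
    by_contra! h0
    simp only [Nat.lt_one_iff.1 h0, Nat.cast_zero] at hq_lt
    linarith
  have hμa : μ * (4 * a) ≤ n := Nat.div_mul_le_self n (4 * a)
  refine ⟨μ, a, hμ, by omega, by nlinarith, by nlinarith, ?_, ?_⟩
  · have : (1 : ℝ) ≤ μ := by exact_mod_cast hμ
    linarith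
  · calc (n : ℝ) ^ q = ((n : ℝ) ^ p) ^ κ := by rw [← rpow_mul hx.le, hpκ]
      _ ≤ ((a : ℝ) - d) ^ κ := by gcongr

theorem oracle_rate_beta_mixing_general
    {Ω ℱ : Type*} [MeasurableSpace Ω] (P : Measure Ω) [IsProbabilityMeasure P]
    (K K₁ c₁ c₂ κ : ℝ) (hK : 0 < K) (hK₁ : 0 < K₁)
    (hc₁ : 0 < c₁) (hc₂ : 0 < c₂) (hκ : 0 < κ)
    (h d : ℕ) (hh : 0 < h)
    (Rn : ℕ → ℱ → ℝ) (Rhat : ℕ → ℱ → Ω → ℝ)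
    (ferm : ℕ → Ω → ℱ) (fstar : ℕ → ℱ)
    (hRnK : ∀ n f, 0 ≤ Rn n f ∧ Rn n f ≤ K)
    (herm : ∀ n ω f, Rhat n (ferm n ω) ω ≤ Rhat n f ω)
    (hint : ∀ n, Integrable (fun ω => Rn n (ferm n ω)) P)
    (hdev : ∀ (n μ a : ℕ), 0 < μ → d < a → 2 * μ * a + d ≤ n →
      ∀ ε : ℝ, 0 < ε →
        P {ω | ∃ f, ε < |Rn n f - Rhat n f ω|} ≤
          ENNReal.ofReal (8 * (2 * μ + 1 : ℝ) ^ h * Real.exp (-μ * ε ^ 2 / K₁ ^ 2)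
            + 2 * μ * (c₁ * Real.exp (-c₂ * ((a : ℝ) - d) ^ κ)))) :
    ∃ C > 0, ∃ N : ℕ, ∀ n ≥ N,
      (∫ ω, Rn n (ferm n ω) ∂P) - Rn n (fstar n) ≤
        C * Real.sqrt (h * Real.log n / (n : ℝ) ^ (κ / (1 + κ))) := by
  have hq : 0 < κ / (1 + κ) := by positivity
  have hq1 : κ / (1 + κ) ≤ 1 := (div_le_one (by positivity)).2 (by linarith)
  have hcast := tendsto_natCast_atTop_atTop (R := ℝ)
  obtain ⟨N, hN⟩ := eventually_atTop.1 <| (eventually_exists_block_sizes hκ d).and <|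
    (hcast.eventually_ge_atTop (exp 1)).and <| hcast.eventually
      (eventually_div_add_mul_exp_neg_rpow_le_one_div_sqrt (8 * K) (2 * K * c₁) hc₂ hq)
  refine ⟨12 * K₁ + 1, by positivity, N, fun n hn => ?_⟩
  obtain ⟨⟨μ, a, hμ, hda, hblock, hμn, hqμ, hqa⟩, hne, hrem⟩ := hN n hn
  have hn1 : (1 : ℝ) < n := (one_lt_exp_iff.2 one_pos).trans_le hne
  have hlog : 0 < log n := log_pos hn1
  set s := K₁ * sqrt (2 * h * log n / μ)
  have hrate := one_div_sqrt_le_sqrt_mul_log_div_rpow hne (Nat.one_le_cast.2 hh) hq1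
  set g := sqrt (h * log n / (n : ℝ) ^ (κ / (1 + κ)))
  have hs : 0 < s := by positivity
  have hcal : (μ : ℝ) * s ^ 2 / K₁ ^ 2 = 2 * h * log n := by
    simp only [s, mul_pow, sq_sqrt (by positivity : 0 ≤ 2 * (h : ℝ) * log n / μ)]
    field_simp
  have hthreshold : 2 * s ≤ 12 * K₁ * g := by
    have := sqrt_two_mul_div_le (c := h * log n) (by positivity) (by positivity) hqμ
    rw [← mul_assoc] at this
    linarith [mul_le_mul_of_nonneg_left this hK₁.le]
  have hremainder := mul_deviation_bound_le hh hn1.le (Nat.cast_nonneg μ)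
    (by exact_mod_cast hμn) hcal hK.le hc₁.le hc₂.le hqa
  have hrisk := integral_sub_le_of_measure_deviation_le hK.le hs.le (by positivity) (hRnK n)
    (fun ω => herm n ω (fstar n)) (hint n) (hdev n μ a hμ hda hblock s hs)
  linarith

/-- Oracle loss upper rate under exponential β-mixing: if the loss is bounded by
`K`, the mixing coefficients decay as `β_a = c₁ exp(−c₂ a^κ)`, and the uniform
deviation bound
`P(sup_f |Rₙ(f) − R̂ₙ(f)| > ε) ≤ 8(2μ+1)^h exp(−με²/K₁²) + 2μ β_{a−d}`
holds for all integers `μ, a` with `2μa + d ≤ n`, then for sufficiently large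
`n` there is a constant `C` (independent of `n` and `h`) such that
`E[Rₙ(f̂_erm) − Rₙ(f*)] ≤ C √(h log n / n^{κ/(1+κ)})`. -/
theorem oracle_rate_beta_mixing
    {Ω ℱ : Type*} [MeasurableSpace Ω] (P : Measure Ω) [IsProbabilityMeasure P]
    (K K₁ c₁ c₂ κ : ℝ) (hK : 0 < K) (hK₁ : 0 < K₁)
    (hc₁ : 0 < c₁) (hc₂ : 0 < c₂) (hκ : 0 < κ)
    (h d : ℕ) (hh : 0 < h)
    (Rn : ℕ → ℱ → ℝ) (Rhat : ℕ → ℱ → Ω → ℝ)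
    (ferm : ℕ → Ω → ℱ) (fstar : ℕ → ℱ)
    (hRnK : ∀ n f, 0 ≤ Rn n f ∧ Rn n f ≤ K)
    (hRhatK : ∀ n f ω, 0 ≤ Rhat n f ω ∧ Rhat n f ω ≤ K)
    (herm : ∀ n ω f, Rhat n (ferm n ω) ω ≤ Rhat n f ω)
    (hstar : ∀ n f, Rn n (fstar n) ≤ Rn n f)
    (hint : ∀ n, Integrable (fun ω => Rn n (ferm n ω)) P)
    (hdev : ∀ (n μ a : ℕ), 0 < μ → d < a → 2 * μ * a + d ≤ n →
      ∀ ε : ℝ, 0 < ε →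
        P {ω | ∃ f, ε < |Rn n f - Rhat n f ω|} ≤
          ENNReal.ofReal (8 * (2 * μ + 1 : ℝ) ^ h * Real.exp (-μ * ε ^ 2 / K₁ ^ 2)
            + 2 * μ * (c₁ * Real.exp (-c₂ * ((a : ℝ) - d) ^ κ)))) :
    ∃ C > 0, ∃ N : ℕ, ∀ n ≥ N,
      (∫ ω, Rn n (ferm n ω) ∂P) - Rn n (fstar n) ≤
        C * Real.sqrt (h * Real.log n / (n : ℝ) ^ (κ / (1 + κ))) :=
  oracle_rate_beta_mixing_general P K K₁ c₁ c₂ κ hK hK₁ hc₁ hc₂ hκ h d hh Rn Rhat ferm fstar hRnK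
    herm hint hdev
end
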